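/- For any two distinct elements e1, e2 of ZMod 13, the sets B8^{e1} and B8^{e2} have nonempty intersection; moreover no point belongs to all thirteen sets B8^e, e ∈ ZMod 13. -/
import Mathlib


/-- Work in the set `(ZMod 13) × {a,b}`, with `a` encoded as `(0 : Fin 2)` and `b`
as `(1 : Fin 2)`. `B8trans e` is the translate by `e` of the basic block
`B8 = {(2,a),(6,a),(5,a),(4,b),(12,b),(10,b)}`. -/
def B8trans (e : ZMod 13) : Finset (ZMod 13 × Fin 2) :=
  {(e + 2, 0), (e + 6, 0), (e + 5, 0), (e + 4, 1), (e + 12, 1), (e + 10, 1)}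

/-- For any two distinct elements `e₁, e₂` of `ZMod 13`, the sets `B8^{e₁}` and
`B8^{e₂}` have nonempty intersection; moreover no point belongs to all thirteen
sets `B8^e`, `e ∈ ZMod 13`. -/
theorem statement_6 :
    (∀ e₁ e₂ : ZMod 13, e₁ ≠ e₂ → (B8trans e₁ ∩ B8trans e₂).Nonempty) ∧
    (¬ ∃ p : ZMod 13 × Fin 2, ∀ e : ZMod 13, p ∈ B8trans e) := by
  refine ⟨by decide, by decide⟩
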